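/- (Laplace operator and the universal Potts partition function.) In the vector space Undir_{n,k}, the Laplace operator applied to the shaved universal Potts partition function evaluated at (−1,1) equals (−1)^k times the universal Potts partition function evaluated at (−1,−1): Δ( ∑_{G∈Υ_{n,k}} Z_{Ĝ}(−1,1)·G ) = (−1)^k ∑_{G∈Υ_{n,k}} Z_G(−1,−1)·G, where Ĝ denotes G with all loops deleted. -/

import Mathlib

open Finset

open scoped Classical Nat

noncomputable section

/-- A directed graph with `n` labeled vertices and `k` labeled edges:
the `ℓ`-th edge is the ordered pair `G ℓ = (a, b)` (an edge from `a` to `b`; loops allowed). -/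
abbrev DG (n k : ℕ) := Fin k → Fin n × Fin n

namespace DG

variable {n k : ℕ}

/-- `step G S a b`: the subgraph of `G` with edge-label set `S` has an edge from `a` to `b`. -/
def step (G : DG n k) (S : Finset (Fin k)) (a b : Fin n) : Prop :=
  ∃ e ∈ S, G e = (a, b)

/-- The subgraph of `G` with edge-label set `S` contains no directed cycle. -/
def Acyclic (G : DG n k) (S : Finset (Fin k)) : Prop :=
  ∀ a : Fin n, ¬ Relation.TransGen (step G S) a a

/-- The edge `e` lies on a directed cycle of the subgraph of `G` with edge set `S`
(equivalently, there is a directed path from the head of `e` back to its tail). -/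
def OnCycle (G : DG n k) (S : Finset (Fin k)) (e : Fin k) : Prop :=
  Relation.ReflTransGen (step G S) (G e).2 (G e).1

/-- Strongly semiconnected: every edge lies on a directed cycle. -/
def SSC (G : DG n k) (S : Finset (Fin k)) : Prop :=
  ∀ e ∈ S, OnCycle G S e

/-- Strongly connected: every ordered pair of vertices is joined by a directed path. -/
def StronglyConnected (G : DG n k) (S : Finset (Fin k)) : Prop :=
  ∀ a b : Fin n, Relation.ReflTransGen (step G S) a b

/-- Adjacency in the underlying undirected graph. -/
def adj (G : DG n k) (S : Finset (Fin k)) (a b : Fin n) : Prop :=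
  ∃ e ∈ S, G e = (a, b) ∨ G e = (b, a)

/-- `β₀`: the number of connected components of the underlying undirected graph
(isolated vertices count as components). -/
def beta0 (G : DG n k) (S : Finset (Fin k)) : ℕ :=
  Nat.card (Quot (adj G S))

/-- `α(H) = (−1)^{#edges}` if `H` is acyclic, `0` otherwise. -/
def alpha (G : DG n k) (S : Finset (Fin k)) : ℤ :=
  if Acyclic G S then (-1) ^ S.card else 0

/-- `σ(H) = (−1)^{β₁}` if `H` is strongly semiconnected, `0` otherwise;
here `β₁ = #edges − n + β₀`, and `(−1)^{#edges − n + β₀} = (−1)^{#edges + n + β₀}`. -/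
def sigma (G : DG n k) (S : Finset (Fin k)) : ℤ :=
  if SSC G S then (-1) ^ (S.card + n + beta0 G S) else 0

/-- The vertex `v` is isolated: incident to no edge. -/
def isolated (G : DG n k) (v : Fin n) : Prop :=
  ∀ e : Fin k, (G e).1 ≠ v ∧ (G e).2 ≠ v

/-- The vertex `v` is a sink: no edge starts at it. -/
def isSink (G : DG n k) (v : Fin n) : Prop :=
  ∀ e : Fin k, (G e).1 ≠ v

end DG
/-- An undirected graph with `n` labeled vertices and `k` labeled edges: the `ℓ`-th edge is
an unordered pair of vertices (loops allowed). -/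
abbrev UG (n k : ℕ) := Fin k → Sym2 (Fin n)

namespace UG

variable {n k : ℕ}

/-- Adjacency in the subgraph of `G` with edge-label set `S`. -/
def adj (G : UG n k) (S : Finset (Fin k)) (a b : Fin n) : Prop :=
  ∃ e ∈ S, G e = s(a, b)

/-- `β₀`: the number of connected components (isolated vertices count as components). -/
def beta0 (G : UG n k) (S : Finset (Fin k)) : ℕ :=
  Nat.card (Quot (adj G S))

/-- The Potts partition function of the subgraph of `G` with edge-label set `E`:
`Z(q,v) = ∑_{H ⊆ G|_E} q^{β₀(H)} v^{#edges of H}`.  The partition function of `G` itself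
is `Zsub G Finset.univ`, and that of `G` with all loops deleted (`Ĝ`) is
`Zsub G {e | G e is not a loop}` (deleting loops changes neither `β₀` of a subgraph
nor the count of its non-loop edges, and a subgraph of `Ĝ` is exactly a subset of the
non-loop edges). -/
def Zsub (G : UG n k) (E : Finset (Fin k)) (q v : ℤ) : ℤ :=
  ∑ S ∈ E.powerset, q ^ beta0 G S * v ^ S.card

/-- The Potts partition function `Z_G(q,v)` of `G`. -/
def Z (G : UG n k) (q v : ℤ) : ℤ :=
  Zsub G Finset.univ q v

end UG

/-- The forgetful map `Γ_{n,k} → Υ_{n,k}` replacing each directed edge by its undirected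
version (labels preserved). -/
def DG.undir {n k : ℕ} (G : DG n k) : UG n k :=
  fun e => s((G e).1, (G e).2)
/-- `Undir_{n,k}`: the ℂ-vector space with basis `Υ_{n,k}`. -/
abbrev US (n k : ℕ) := UG n k →₀ ℂ

namespace UG

/-- Action of `B_p` on a basis graph `G`: identity if the `p`-th edge is not a loop, and
`−∑_{b ≠ a} R_{ab;p} G` if it is a loop at the vertex `a`, where `R_{ab;p} G` replaces the
`p`-th edge by the undirected edge `{a,b}`. -/
noncomputable def Bsingle (n k : ℕ) (p : Fin k) (G : UG n k) : US n k :=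
  if (G p).IsDiag then
    - ∑ b ∈ Finset.univ.filter (fun b => b ≠ (Quot.out (G p)).1),
        Finsupp.single (Function.update G p (s((Quot.out (G p)).1, b))) (1 : ℂ)
  else Finsupp.single G 1

/-- The linear operator `B_p : Undir_{n,k} → Undir_{n,k}`. -/
noncomputable def B (n k : ℕ) (p : Fin k) : US n k →ₗ[ℂ] US n k :=
  Finsupp.lsum ℂ fun G => LinearMap.toSpanSingleton ℂ (US n k) (Bsingle n k p G)

/-- The Laplace operator `Δ = B_1 ⋯ B_k` on `Undir_{n,k}`. -/
noncomputable def Laplace (n k : ℕ) : US n k →ₗ[ℂ] US n k :=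
  (List.ofFn fun p : Fin k => B n k p).prod

end UG

/-!
Each `B_p` only touches the `p`-th edge, so `Δ G` is `(-1)^{#loops of G}` times the sum of all
graphs obtained from `G` by replacing every loop at a vertex `a` by an edge `{a, b}`, `b ≠ a`.
The coefficient of a graph `H` on the left is therefore a sum over the graphs `G` that resolve to
`H`. If `H` has a loop there are none, and `Z_H(-1,-1) = 0` because toggling a loop flips the sign
of `v^{#S}` without changing `β₀`. If `H` is loopless, each of its edges `{a, b}` comes from
itself or from a loop at `a` or at `b`. Expanding `Z_Ĝ(-1,1)` over sets `S` of non-loop edges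
and exchanging the sums, the term of `S` forces `G = H` on `S`, while every edge outside `S`
contributes independently a factor `1 - 1 - 1 = -1`; this leaves
`∑_S (-1)^{β₀(H|S)} (-1)^{k - #S} = (-1)^k Z_H(-1,-1)`.
-/

theorem Sym2.out_fst_mk_self {α : Type*} (a : α) : (Quot.out s(a, a)).1 = a := by
  simpa using Sym2.out_fst_mem s(a, a)

theorem Nat.card_quot_congr {α : Type*} {r s : α → α → Prop}
    (hrs : ∀ a b, r a b → Quot.mk s a = Quot.mk s b)
    (hsr : ∀ a b, s a b → Quot.mk r a = Quot.mk r b) :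
    Nat.card (Quot r) = Nat.card (Quot s) :=
  Nat.card_congr
    { toFun := Quot.lift (Quot.mk s) hrs
      invFun := Quot.lift (Quot.mk r) hsr
      left_inv := fun q => by induction q using Quot.ind; rfl
      right_inv := fun q => by induction q using Quot.ind; rfl }

theorem Fintype.sum_smul_sum_eq_sum_filter_smul {ι κ R M : Type*} [Fintype ι] [Fintype κ]
    [DecidableEq κ] [Semiring R] [AddCommMonoid M] [Module R M]
    (a : ι → R) (T : ι → Finset κ) (x : κ → M) :
    ∑ i, a i • ∑ j ∈ T i, x j = ∑ j, (∑ i with j ∈ T i, a i) • x j := by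
  simp_rw [smul_sum, sum_smul]
  exact sum_comm' (by simp)

theorem Fintype.sum_piFinset_update {ι α M : Type*} [Fintype ι] [DecidableEq ι] [DecidableEq α]
    [AddCommMonoid M] {t : ι → Finset α} {p : ι} {x : α} (ht : t p = {x}) (u : Finset α)
    (F : (ι → α) → M) :
    ∑ f ∈ piFinset t, ∑ z ∈ u, F (Function.update f p z)
      = ∑ f ∈ piFinset (Function.update t p u), F f := by
  rw [← sum_product']
  refine sum_nbij' (fun fz => Function.update fz.1 p fz.2)
    (fun f => (Function.update f p x, f p)) ?_ ?_ ?_ ?_ (fun _ _ => rfl)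
  · rintro ⟨f, z⟩ h
    simp only [mem_product, mem_piFinset] at h ⊢
    grind
  · intro f h
    simp only [mem_product, mem_piFinset] at h ⊢
    grind
  · rintro ⟨f, z⟩ h
    have hfp : f p = x := by simpa [ht] using mem_piFinset.1 (mem_product.1 h).1 p
    simp [← hfp]
  · intro f _
    simp

theorem Fintype.prod_ite_mem_one_neg_one {ι R : Type*} [Fintype ι] [DecidableEq ι] [CommRing R]
    (S : Finset ι) :
    ∏ i, (if i ∈ S then 1 else -1 : R) = (-1) ^ Fintype.card ι * (-1) ^ #S := by
  calc ∏ i, (if i ∈ S then 1 else -1 : R) = ∏ i, (-1) * (if i ∈ S then -1 else 1 : R) := by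
        refine Finset.prod_congr rfl fun i _ => ?_
        split_ifs <;> ring
    _ = _ := by rw [prod_mul_distrib, prod_const, prod_ite_mem_eq, prod_const, card_univ]

open Fintype (piFinset mem_piFinset piFinset_singleton piFinset_eq_empty)

namespace UG

variable {n k : ℕ}

theorem adj_congr {G H : UG n k} {S : Finset (Fin k)} (h : ∀ e ∈ S, G e = H e) :
    adj G S = adj H S := by
  ext a b
  exact ⟨fun ⟨e, he, hG⟩ => ⟨e, he, h e he ▸ hG⟩,
    fun ⟨e, he, hH⟩ => ⟨e, he, (h e he).symm ▸ hH⟩⟩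

theorem beta0_congr {G H : UG n k} {S : Finset (Fin k)} (h : ∀ e ∈ S, G e = H e) :
    beta0 G S = beta0 H S := by
  rw [beta0, beta0, adj_congr h]

theorem beta0_insert_of_isDiag {G : UG n k} {e : Fin k} (he : (G e).IsDiag) (S : Finset (Fin k)) :
    beta0 G (insert e S) = beta0 G S := by
  refine Nat.card_quot_congr ?_ ?_
  · rintro a b ⟨f, hf, hGf⟩
    rcases mem_insert.1 hf with rfl | hf
    · rw [hGf, Sym2.mk_isDiag_iff] at he
      rw [he]
    · exact Quot.sound ⟨f, hf, hGf⟩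
  · rintro a b ⟨f, hf, hGf⟩
    exact Quot.sound ⟨f, mem_insert_of_mem hf, hGf⟩

theorem Zsub_eq_of_isDiag {G : UG n k} {E : Finset (Fin k)} {e : Fin k} (heE : e ∈ E)
    (he : (G e).IsDiag) (q v : ℤ) :
    Zsub G E q v = (1 + v) * Zsub G (E.erase e) q v := by
  conv_lhs => rw [Zsub, ← insert_erase heE]
  rw [sum_powerset_insert (notMem_erase e E), Zsub, add_mul, one_mul, mul_sum,
    ← sum_add_distrib, ← sum_add_distrib]
  refine sum_congr rfl fun S hS => ?_
  have heS : e ∉ S := fun h => notMem_erase e E (mem_powerset.1 hS h)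
  rw [beta0_insert_of_isDiag he, card_insert_of_notMem heS, pow_succ]
  ring

theorem Z_eq_zero_of_isDiag {G : UG n k} {e : Fin k} (he : (G e).IsDiag) (q : ℤ) :
    Z G q (-1) = 0 := by
  rw [Z, Zsub_eq_of_isDiag (mem_univ e) he, add_neg_cancel, zero_mul]

/-- The edges that `B_p` puts in place of an edge `g`: `g` itself if it is not a loop, and the
edges `{a, b}`, `b ≠ a`, if it is a loop at `a`. -/
def resolve (g : Sym2 (Fin n)) : Finset (Sym2 (Fin n)) :=
  if g.IsDiag then ({b | b ≠ (Quot.out g).1} : Finset (Fin n)).image fun b => s((Quot.out g).1, b)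
  else {g}

def loopSign (g : Sym2 (Fin n)) : ℂ :=
  if g.IsDiag then -1 else 1

def resolveFiber (z : Sym2 (Fin n)) : Finset (Sym2 (Fin n)) :=
  {g | z ∈ resolve g}

theorem mem_resolve_of_not_isDiag {g z : Sym2 (Fin n)} (hg : ¬ g.IsDiag) :
    z ∈ resolve g ↔ z = g := by
  simp [resolve, hg]

theorem mem_resolve_mk_self {a : Fin n} {z : Sym2 (Fin n)} :
    z ∈ resolve s(a, a) ↔ ¬ z.IsDiag ∧ a ∈ z := by
  simp only [resolve, Sym2.mk_isDiag_iff, if_true, Sym2.out_fst_mk_self, mem_image, mem_filter,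
    mem_univ, true_and]
  constructor
  · rintro ⟨b, hb, rfl⟩
    exact ⟨fun h => hb (Sym2.mk_isDiag_iff.1 h).symm, Sym2.mem_mk_left a b⟩
  · rintro ⟨hz, ha⟩
    refine ⟨Sym2.Mem.other ha, fun h => hz ?_, Sym2.other_spec ha⟩
    rw [← Sym2.other_spec ha, h]
    rfl

theorem not_isDiag_of_mem_resolve {g z : Sym2 (Fin n)} (hz : z ∈ resolve g) : ¬ z.IsDiag := by
  by_cases hg : g.IsDiag
  · induction g using Sym2.ind with | _ a b =>
    obtain rfl : a = b := hg
    exact (mem_resolve_mk_self.1 hz).1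
  · rwa [(mem_resolve_of_not_isDiag hg).1 hz]

theorem resolveFiber_eq_empty {z : Sym2 (Fin n)} (hz : z.IsDiag) : resolveFiber z = ∅ :=
  filter_false_of_mem fun _ _ h => not_isDiag_of_mem_resolve h hz

theorem resolveFiber_mk {a b : Fin n} (hab : a ≠ b) :
    resolveFiber s(a, b) = {s(a, b), s(a, a), s(b, b)} := by
  ext g
  simp only [resolveFiber, mem_filter, mem_univ, true_and, mem_insert, mem_singleton]
  by_cases hg : g.IsDiag
  · induction g using Sym2.ind with | _ c d =>
    obtain rfl : c = d := hg
    simp only [mem_resolve_mk_self, Sym2.mk_isDiag_iff, hab, not_false_eq_true, true_and,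
      Sym2.mem_iff, Sym2.eq_iff]
    tauto
  · rw [mem_resolve_of_not_isDiag hg, eq_comm]
    refine ⟨Or.inl, fun h => h.resolve_right ?_⟩
    rintro (rfl | rfl) <;> exact hg rfl

theorem sum_resolveFiber {z : Sym2 (Fin n)} (hz : ¬ z.IsDiag) (P : Prop) [Decidable P] :
    ∑ g ∈ resolveFiber z, (if P → ¬ g.IsDiag then loopSign g else 0)
      = if P then 1 else -1 := by
  induction z using Sym2.ind with | _ a b =>
  have hab : a ≠ b := hz
  rw [resolveFiber_mk hab, sum_insert (by simp [hab, hab.symm]), sum_insert (by simp [hab]),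
    sum_singleton]
  by_cases hP : P <;> simp [hP, loopSign, hab]

theorem filter_mem_piFinset_resolve (H : UG n k) :
    ({G | H ∈ piFinset fun e => resolve (G e)} : Finset (UG n k))
      = piFinset fun e => resolveFiber (H e) := by
  ext G
  simp [resolveFiber, mem_piFinset]

theorem B_single (p : Fin k) (G : UG n k) : B n k p (Finsupp.single G 1) = Bsingle n k p G := by
  simp [B]

theorem Bsingle_eq (p : Fin k) (G : UG n k) :
    Bsingle n k p G
      = loopSign (G p) • ∑ z ∈ resolve (G p), Finsupp.single (Function.update G p z) 1 := by
  by_cases hp : (G p).IsDiag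
  · rw [Bsingle, if_pos hp, resolve, if_pos hp, loopSign, if_pos hp, sum_image]
    · simp
    · exact fun b _ c _ hbc => Sym2.congr_right.1 hbc
  · simp [Bsingle, resolve, loopSign, hp]

theorem B_sum_piFinset (p : Fin k) {t : Fin k → Finset (Sym2 (Fin n))} {g : Sym2 (Fin n)}
    (ht : t p = {g}) :
    B n k p (∑ G ∈ piFinset t, Finsupp.single G 1)
      = loopSign g •
          ∑ G ∈ piFinset (Function.update t p (resolve g)), Finsupp.single G 1 := by
  have hGp : ∀ G ∈ piFinset t, G p = g := fun G hG => by
    simpa [ht] using mem_piFinset.1 hG p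
  rw [map_sum, sum_congr rfl fun G hG => by rw [B_single, Bsingle_eq, hGp G hG], ← smul_sum,
    Fintype.sum_piFinset_update ht _ fun G => Finsupp.single G (1 : ℂ)]

theorem list_prod_B_single {l : List (Fin k)} (hl : l.Nodup) (G : UG n k) :
    (l.map (B n k)).prod (Finsupp.single G 1)
      = (∏ p ∈ l.toFinset, loopSign (G p)) •
          ∑ H ∈ piFinset fun e => if e ∈ l then resolve (G e) else {G e},
            Finsupp.single H 1 := by
  induction l with
  | nil => simp [piFinset_singleton]
  | cons p l ih =>
    obtain ⟨hp, hl⟩ := List.nodup_cons.1 hl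
    rw [List.map_cons, List.prod_cons, Module.End.mul_apply, ih hl, map_smul,
      B_sum_piFinset p (g := G p) (by simp [hp]), smul_smul, List.toFinset_cons,
      prod_insert (by simpa using hp), mul_comm]
    congr 3
    funext e
    by_cases he : e = p <;> simp [he]

theorem laplace_single (G : UG n k) :
    Laplace n k (Finsupp.single G 1)
      = (∏ p, loopSign (G p)) •
          ∑ H ∈ piFinset fun e => resolve (G e), Finsupp.single H 1 := by
  simpa [Laplace, List.ofFn_eq_map] using list_prod_B_single (List.nodup_finRange k) G

theorem Zsub_nonloops_mul_prod_loopSign {G H : UG n k}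
    (hG : G ∈ piFinset fun e => resolveFiber (H e)) :
    ((Zsub G {e | ¬ (G e).IsDiag} (-1) 1 : ℤ) : ℂ) * ∏ e, loopSign (G e)
      = ∑ S : Finset (Fin k), (-1) ^ beta0 H S *
          ∏ e, if e ∈ S → ¬ (G e).IsDiag then loopSign (G e) else 0 := by
  have hGH : ∀ e, ¬ (G e).IsDiag → G e = H e := fun e he =>
    ((mem_resolve_of_not_isDiag he).1 (mem_filter.1 (mem_piFinset.1 hG e)).2).symm
  rw [Zsub, ← filter_subset_univ, sum_filter, Int.cast_sum, sum_mul]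
  refine sum_congr rfl fun S _ => ?_
  rw [Fintype.prod_ite_zero]
  by_cases hS : ∀ e, e ∈ S → ¬ (G e).IsDiag
  · have hSsub : S ⊆ ({e | ¬ (G e).IsDiag} : Finset (Fin k)) := fun e he =>
      mem_filter.2 ⟨mem_univ e, hS e he⟩
    rw [if_pos hSsub, if_pos hS, beta0_congr fun e he => hGH e (hS e he)]
    push_cast
    ring
  · have hSsub : ¬ S ⊆ ({e | ¬ (G e).IsDiag} : Finset (Fin k)) := fun h =>
      hS fun e he => (mem_filter.1 (h he)).2
    rw [if_neg hSsub, if_neg hS]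
    simp

theorem sum_piFinset_resolveFiber (H : UG n k) :
    ∑ G ∈ piFinset fun e => resolveFiber (H e),
        ((Zsub G {e | ¬ (G e).IsDiag} (-1) 1 : ℤ) : ℂ) * ∏ e, loopSign (G e)
      = (-1) ^ k * (Z H (-1) (-1) : ℂ) := by
  by_cases hH : ∃ e, (H e).IsDiag
  · obtain ⟨e, he⟩ := hH
    rw [piFinset_eq_empty.2 ⟨e, resolveFiber_eq_empty he⟩, Z_eq_zero_of_isDiag he]
    simp
  push Not at hH
  calc _ = ∑ S : Finset (Fin k), (-1) ^ beta0 H S *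
          ∑ G ∈ piFinset fun e => resolveFiber (H e),
            ∏ e, if e ∈ S → ¬ (G e).IsDiag then loopSign (G e) else 0 := by
        rw [sum_congr rfl fun G hG => Zsub_nonloops_mul_prod_loopSign hG, sum_comm]
        simp_rw [mul_sum]
    _ = ∑ S : Finset (Fin k), (-1) ^ beta0 H S * ∏ e, (if e ∈ S then 1 else -1 : ℂ) := by
        congr! 2 with S
        rw [← prod_univ_sum _ fun e g => if e ∈ S → ¬ g.IsDiag then loopSign g else 0]
        exact prod_congr rfl fun e _ => sum_resolveFiber (hH e) _
    _ = _ := by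
        rw [Z, Zsub, powerset_univ, Int.cast_sum, mul_sum]
        congr! 1 with S
        push_cast
        rw [Fintype.prod_ite_mem_one_neg_one, Fintype.card_fin]
        ring

end UG

/-- Laplace operator and the universal Potts partition function.
`Δ( ∑_{G∈Υ_{n,k}} Z_{Ĝ}(−1,1)·G ) = (−1)^k ∑_{G∈Υ_{n,k}} Z_G(−1,−1)·G` in `Undir_{n,k}`,
where `Ĝ` is `G` with all loops deleted. -/
theorem laplace_universal_potts (n k : ℕ) :
    UG.Laplace n k
        (∑ G : UG n k,
          ((UG.Zsub G (Finset.univ.filter fun e => ¬ (G e).IsDiag) (-1) 1 : ℤ) : ℂ)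
            • Finsupp.single G (1 : ℂ))
      = (-1 : ℂ) ^ k •
          ∑ G : UG n k, ((UG.Z G (-1) (-1) : ℤ) : ℂ) • Finsupp.single G (1 : ℂ) := by
  simp only [map_sum, map_smul, UG.laplace_single, smul_smul]
  rw [Fintype.sum_smul_sum_eq_sum_filter_smul, smul_sum]
  refine sum_congr rfl fun H _ => ?_
  rw [UG.filter_mem_piFinset_resolve, UG.sum_piFinset_resolveFiber, smul_smul]
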